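/- arXiv:2411.07324 — 3 statements merged into one kernel-verified Lean document; each statement's English description precedes it below -/
import Mathlib

section
/- The Hilbert matrix H = (1/(i+j+1))_{i,j≥0} defines a bounded linear operator on ℓ², i.e., for every x ∈ ℓ², the sequence (Σ_m x_m/(n+m+1))_{n≥0} is in ℓ² and the map x ↦ Hx is bounded. -/
namespace HilbertAux

noncomputable def a (n m : ℕ) : ℝ := ((n : ℝ) + m + 1)⁻¹
noncomputable def p (n : ℕ) : ℝ := (Real.sqrt ((n : ℝ) + 1))⁻¹

lemma a_pos (n m : ℕ) : 0 < a n m := by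
  unfold a; positivity

lemma p_pos (n : ℕ) : 0 < p n := by
  unfold p; positivity

lemma a_symm (n m : ℕ) : a n m = a m n := by unfold a; ring_nf

/-- termwise telescoping bound for `1/√(m+1)` -/
lemma sqrt_inv_le (m : ℕ) :
    (Real.sqrt ((m : ℝ) + 1))⁻¹ ≤ 2 * Real.sqrt ((m : ℝ) + 1) - 2 * Real.sqrt m := by
  have hm : (0:ℝ) ≤ (m:ℝ) := by positivity
  set t := Real.sqrt (m:ℝ) with ht
  set s := Real.sqrt ((m:ℝ)+1) with hs
  have hs2 : s ^ 2 = (m:ℝ) + 1 := Real.sq_sqrt (by linarith)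
  have ht2 : t ^ 2 = (m:ℝ) := Real.sq_sqrt hm
  have hspos : 0 < s := Real.sqrt_pos.2 (by linarith)
  have htnn : 0 ≤ t := Real.sqrt_nonneg _
  rw [inv_le_iff_one_le_mul₀ hspos]
  nlinarith [sq_nonneg (s - t)]

lemma sum_p_le (N : ℕ) : ∑ m ∈ Finset.range N, p m ≤ 2 * Real.sqrt N := by
  have h := Finset.sum_range_sub (fun m : ℕ => 2 * Real.sqrt m) N
  have hle : ∑ m ∈ Finset.range N, p m ≤
      ∑ m ∈ Finset.range N, (2 * Real.sqrt ((m:ℝ) + 1) - 2 * Real.sqrt m) := by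
    refine Finset.sum_le_sum fun m _ => ?_
    exact sqrt_inv_le m
  have : ∀ m : ℕ, 2 * Real.sqrt ((m:ℝ)+1) - 2 * Real.sqrt m
      = (fun m : ℕ => 2 * Real.sqrt m) (m+1) - (fun m : ℕ => 2 * Real.sqrt m) m := by
    intro m; simp [Nat.cast_add]
  calc ∑ m ∈ Finset.range N, p m
      ≤ ∑ m ∈ Finset.range N, ((fun m : ℕ => 2 * Real.sqrt m) (m+1)
          - (fun m : ℕ => 2 * Real.sqrt m) m) := by
        rw [← Finset.sum_congr rfl (fun m _ => this m)]; exact hle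
    _ = 2 * Real.sqrt N - 2 * Real.sqrt 0 := by rw [h]; norm_num
    _ ≤ 2 * Real.sqrt N := by simp [Real.sqrt_nonneg]

/-- termwise telescoping bound for `1/((k+i+1)√(k+i+1))` -/
lemma cube_le (k i : ℕ) (hk : 1 ≤ k) :
    (((k:ℝ) + i + 1) * Real.sqrt ((k:ℝ) + i + 1))⁻¹ ≤
      2 * ((Real.sqrt ((k:ℝ) + i))⁻¹ - (Real.sqrt ((k:ℝ) + i + 1))⁻¹) := by
  have hk1 : (1:ℝ) ≤ (k:ℝ) := by exact_mod_cast hk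
  set u := Real.sqrt ((k:ℝ) + i) with hu
  set v := Real.sqrt ((k:ℝ) + i + 1) with hv
  have hu2 : u ^ 2 = (k:ℝ) + i := Real.sq_sqrt (by positivity)
  have hv2 : v ^ 2 = (k:ℝ) + i + 1 := Real.sq_sqrt (by positivity)
  have hupos : 0 < u := Real.sqrt_pos.2 (by positivity)
  have hvpos : 0 < v := Real.sqrt_pos.2 (by positivity)
  have huv : u ≤ v := Real.sqrt_le_sqrt (by linarith)
  have hr : 2 * (u⁻¹ - v⁻¹) = 2 * (v - u) / (u * v) := by
    field_simp
  rw [hr, ← hv2, inv_eq_one_div]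
  rw [div_le_div_iff₀ (by positivity) (by positivity)]
  have hdiff : (v - u) * (v + u) = 1 := by nlinarith
  nlinarith [mul_pos hupos hvpos, mul_nonneg (mul_nonneg (sub_nonneg.2 huv) hvpos.le) hvpos.le,
    mul_nonneg (mul_nonneg (sub_nonneg.2 huv) hupos.le) hvpos.le]

lemma tail_sum (k : ℕ) (hk : 1 ≤ k) :
    Summable (fun i : ℕ => (((k:ℝ) + i + 1) * Real.sqrt ((k:ℝ) + i + 1))⁻¹) ∧
    ∑' i : ℕ, (((k:ℝ) + i + 1) * Real.sqrt ((k:ℝ) + i + 1))⁻¹ ≤ 2 * (Real.sqrt k)⁻¹ := by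
  set c : ℕ → ℝ := fun i => (((k:ℝ) + i + 1) * Real.sqrt ((k:ℝ) + i + 1))⁻¹ with hc
  have hc0 : ∀ i, 0 ≤ c i := fun i => by positivity
  have hpart : ∀ N : ℕ, ∑ i ∈ Finset.range N, c i ≤ 2 * (Real.sqrt k)⁻¹ := by
    intro N
    have h := Finset.sum_range_sub' (fun i : ℕ => 2 * (Real.sqrt ((k:ℝ) + i))⁻¹) N
    calc ∑ i ∈ Finset.range N, c i
        ≤ ∑ i ∈ Finset.range N, ((fun i : ℕ => 2 * (Real.sqrt ((k:ℝ) + i))⁻¹) i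
            - (fun i : ℕ => 2 * (Real.sqrt ((k:ℝ) + i))⁻¹) (i+1)) := by
          refine Finset.sum_le_sum fun i _ => ?_
          have := cube_le k i hk
          have hcast : ((k:ℝ) + (i+1:ℕ)) = (k:ℝ) + i + 1 := by push_cast; ring
          simp only [hcast]
          linarith
      _ = 2 * (Real.sqrt ((k:ℝ) + (0:ℕ)))⁻¹ - 2 * (Real.sqrt ((k:ℝ) + N))⁻¹ := by rw [h]
      _ ≤ 2 * (Real.sqrt k)⁻¹ := by
          have : 0 ≤ 2 * (Real.sqrt ((k:ℝ) + N))⁻¹ := by positivity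
          push_cast
          simp only [add_zero] at *
          linarith
  exact ⟨summable_of_sum_range_le hc0 hpart, Real.tsum_le_of_sum_range_le hc0 hpart⟩


/-- Schur test row bound: `∑ₘ a n m * p m ≤ 4 p n`. -/
lemma row (n : ℕ) : Summable (fun m => a n m * p m) ∧ ∑' m, a n m * p m ≤ 4 * p n := by
  set f : ℕ → ℝ := fun m => a n m * p m with hf
  have hf0 : ∀ m, 0 ≤ f m := fun m => mul_nonneg (a_pos n m).le (p_pos m).le
  -- tail comparison
  have htail_le : ∀ i : ℕ, f (i + (n+1)) ≤
      ((((n+1:ℕ):ℝ) + i + 1) * Real.sqrt (((n+1:ℕ):ℝ) + i + 1))⁻¹ := by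
    intro i
    have h1 : a n (i + (n+1)) ≤ (((n+1:ℕ):ℝ) + i + 1)⁻¹ := by
      unfold a
      apply inv_anti₀ (by positivity)
      push_cast; linarith
    have h2 : p (i + (n+1)) = (Real.sqrt (((n+1:ℕ):ℝ) + i + 1))⁻¹ := by
      unfold p; congr 1; push_cast; ring_nf
    rw [hf]
    simp only
    rw [h2, mul_inv]
    exact mul_le_mul_of_nonneg_right h1 (by positivity)
  obtain ⟨hcsum, hcle⟩ := tail_sum (n+1) (by omega)
  have htailsum : Summable (fun i => f (i + (n+1))) :=
    Summable.of_nonneg_of_le (fun i => hf0 _) htail_le hcsum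
  have hsum : Summable f := (summable_nat_add_iff (n+1)).1 htailsum
  refine ⟨hsum, ?_⟩
  have hsplit := Summable.sum_add_tsum_nat_add (f := f) (n+1) hsum
  -- head bound
  have hhead : ∑ m ∈ Finset.range (n+1), f m ≤ 2 * p n := by
    have h1 : ∀ m ∈ Finset.range (n+1), f m ≤ ((n:ℝ)+1)⁻¹ * p m := by
      intro m _
      refine mul_le_mul_of_nonneg_right ?_ (p_pos m).le
      unfold a
      apply inv_anti₀ (by positivity)
      have : (0:ℝ) ≤ (m:ℝ) := by positivity
      linarith
    calc ∑ m ∈ Finset.range (n+1), f m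
        ≤ ∑ m ∈ Finset.range (n+1), ((n:ℝ)+1)⁻¹ * p m := Finset.sum_le_sum h1
      _ = ((n:ℝ)+1)⁻¹ * ∑ m ∈ Finset.range (n+1), p m := by rw [Finset.mul_sum]
      _ ≤ ((n:ℝ)+1)⁻¹ * (2 * Real.sqrt ((n+1:ℕ):ℝ)) := by
          apply mul_le_mul_of_nonneg_left (sum_p_le (n+1)) (by positivity)
      _ = 2 * p n := by
          unfold p
          have hs : Real.sqrt ((n:ℝ)+1) * Real.sqrt ((n:ℝ)+1) = (n:ℝ)+1 :=
            Real.mul_self_sqrt (by positivity)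
          have hc : ((n+1:ℕ):ℝ) = (n:ℝ)+1 := by push_cast; ring
          rw [hc]
          have hpos : (0:ℝ) < Real.sqrt ((n:ℝ)+1) := Real.sqrt_pos.2 (by positivity)
          field_simp
          nlinarith
  -- tail bound
  have htail : ∑' i, f (i + (n+1)) ≤ 2 * p n := by
    have h1 : ∑' i, f (i + (n+1)) ≤
        ∑' i : ℕ, ((((n+1:ℕ):ℝ) + i + 1) * Real.sqrt (((n+1:ℕ):ℝ) + i + 1))⁻¹ :=
      Summable.tsum_le_tsum htail_le htailsum hcsum
    have h2 : (2:ℝ) * (Real.sqrt ((n+1:ℕ):ℝ))⁻¹ = 2 * p n := by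
      unfold p; congr 2; push_cast; ring_nf
    calc ∑' i, f (i + (n+1)) ≤ _ := h1
      _ ≤ 2 * (Real.sqrt ((n+1:ℕ):ℝ))⁻¹ := hcle
      _ = 2 * p n := h2
  have : tsum f ≤ 2 * p n + 2 * p n := by rw [← hsplit]; exact add_le_add hhead htail
  linarith

/-- Cauchy–Schwarz for infinite sums of nonnegative reals. -/
lemma cs {f g : ℕ → ℝ} (hf0 : ∀ m, 0 ≤ f m) (hg0 : ∀ m, 0 ≤ g m)
    (hf : Summable (fun m => f m ^ 2)) (hg : Summable (fun m => g m ^ 2)) :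
    Summable (fun m => f m * g m) ∧
      (∑' m, f m * g m) ^ 2 ≤ (∑' m, f m ^ 2) * (∑' m, g m ^ 2) := by
  have hfg0 : ∀ m, 0 ≤ f m * g m := fun m => mul_nonneg (hf0 m) (hg0 m)
  have hle : ∀ m, f m * g m ≤ (f m ^ 2 + g m ^ 2) / 2 := by
    intro m; nlinarith [sq_nonneg (f m - g m)]
  have hsum : Summable (fun m => f m * g m) :=
    Summable.of_nonneg_of_le hfg0 hle ((hf.add hg).div_const 2)
  refine ⟨hsum, ?_⟩
  set A := ∑' m, f m ^ 2 with hA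
  set B := ∑' m, g m ^ 2 with hB
  have hA0 : 0 ≤ A := tsum_nonneg fun m => sq_nonneg _
  have hB0 : 0 ≤ B := tsum_nonneg fun m => sq_nonneg _
  have hbdd : ∀ s : Finset ℕ, ∑ m ∈ s, f m * g m ≤ Real.sqrt (A * B) := by
    intro s
    have h1 : (∑ m ∈ s, f m * g m) ^ 2 ≤ (∑ m ∈ s, f m ^ 2) * ∑ m ∈ s, g m ^ 2 :=
      Finset.sum_mul_sq_le_sq_mul_sq s f g
    have h2 : (∑ m ∈ s, f m ^ 2) ≤ A := Summable.sum_le_tsum s (fun m _ => sq_nonneg _) hf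
    have h3 : (∑ m ∈ s, g m ^ 2) ≤ B := Summable.sum_le_tsum s (fun m _ => sq_nonneg _) hg
    have h4 : (∑ m ∈ s, f m * g m) ^ 2 ≤ A * B := by
      refine h1.trans (mul_le_mul h2 h3 ?_ hA0)
      exact Finset.sum_nonneg fun m _ => sq_nonneg _
    have h5 : 0 ≤ ∑ m ∈ s, f m * g m := Finset.sum_nonneg fun m _ => hfg0 m
    exact (Real.le_sqrt h5 (mul_nonneg hA0 hB0)).2 h4
  have h6 : ∑' m, f m * g m ≤ Real.sqrt (A * B) := Summable.tsum_le_of_sum_le hsum hbdd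
  have h7 : 0 ≤ ∑' m, f m * g m := tsum_nonneg hfg0
  calc (∑' m, f m * g m) ^ 2 ≤ Real.sqrt (A * B) ^ 2 := by
        exact pow_le_pow_left₀ h7 h6 2
    _ = A * B := Real.sq_sqrt (mul_nonneg hA0 hB0)

end HilbertAux

open HilbertAux ENNReal in
/-- The Hilbert matrix defines a bounded linear operator on `ℓ²`: for every
square-summable sequence `x`, the sequence `(∑ₘ xₘ/(n+m+1))ₙ` is square-summable,
and the map is bounded. -/
theorem hilbert_matrix_bounded_on_l2 :
    ∃ C : ℝ, 0 ≤ C ∧ ∀ x : lp (fun _ : ℕ => ℂ) 2,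
      Memℓp (fun n : ℕ => ∑' m : ℕ, x m / ((n : ℂ) + (m : ℂ) + 1)) 2 ∧
      ∑' n : ℕ, ‖∑' m : ℕ, x m / ((n : ℂ) + (m : ℂ) + 1)‖ ^ 2 ≤
        C * ∑' n : ℕ, ‖x n‖ ^ 2 := by
  classical
  refine ⟨16, by norm_num, fun x => ?_⟩
  set b : ℕ → ℝ := fun m => ‖x m‖ with hb
  have hb0 : ∀ m, 0 ≤ b m := fun m => norm_nonneg _
  have hb2 : Summable (fun m => b m ^ 2) := by
    have h := (lp.memℓp x).summable (p := 2) (by norm_num)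
    have : ∀ i : ℕ, ‖x i‖ ^ (2 : ℝ≥0∞).toReal = b i ^ 2 := by
      intro i
      rw [hb]
      norm_num
    exact h.congr this
  -- norm of the matrix entries
  have hnorm : ∀ n m : ℕ, ‖x m / ((n:ℂ) + (m:ℂ) + 1)‖ = a n m * b m := by
    intro n m
    rw [norm_div]
    have hc : ((n:ℂ) + (m:ℂ) + 1) = ((((n:ℝ) + m + 1) : ℝ) : ℂ) := by push_cast; ring
    rw [hc, Complex.norm_real, Real.norm_of_nonneg (by positivity)]
    unfold a
    rw [div_eq_inv_mul]
  -- auxiliary summability: a n m / p m ≤ 1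
  have hap1 : ∀ n m : ℕ, a n m / p m ≤ 1 := by
    intro n m
    unfold a p
    rw [div_eq_mul_inv, inv_inv]
    have h1 : ((n:ℝ) + m + 1)⁻¹ ≤ ((m:ℝ) + 1)⁻¹ := by
      apply inv_anti₀ (by positivity)
      have : (0:ℝ) ≤ (n:ℝ) := by positivity
      linarith
    have h2 : Real.sqrt ((m:ℝ) + 1) ≤ (m:ℝ) + 1 := by
      have hy : (0:ℝ) ≤ (m:ℝ) + 1 := by positivity
      calc Real.sqrt ((m:ℝ) + 1) ≤ Real.sqrt (((m:ℝ) + 1) ^ 2) := by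
            apply Real.sqrt_le_sqrt; nlinarith
        _ = (m:ℝ) + 1 := Real.sqrt_sq hy
    calc ((n:ℝ) + m + 1)⁻¹ * Real.sqrt ((m:ℝ) + 1)
        ≤ ((m:ℝ) + 1)⁻¹ * ((m:ℝ) + 1) :=
          mul_le_mul h1 h2 (Real.sqrt_nonneg _) (by positivity)
      _ = 1 := inv_mul_cancel₀ (by positivity)
  have hap0 : ∀ n m : ℕ, 0 ≤ a n m / p m := fun n m =>
    div_nonneg (a_pos n m).le (p_pos m).le
  -- key per-row Cauchy-Schwarz estimate
  have key : ∀ n : ℕ, Summable (fun m => a n m * b m) ∧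
      Summable (fun m => (a n m / p m) * b m ^ 2) ∧
      (∑' m, a n m * b m) ^ 2 ≤ 4 * p n * ∑' m, (a n m / p m) * b m ^ 2 := by
    intro n
    set f : ℕ → ℝ := fun m => Real.sqrt (a n m * p m) with hfdef
    set g : ℕ → ℝ := fun m => Real.sqrt (a n m / p m) * b m with hgdef
    have hf2 : ∀ m, f m ^ 2 = a n m * p m := fun m =>
      Real.sq_sqrt (mul_nonneg (a_pos n m).le (p_pos m).le)
    have hg2 : ∀ m, g m ^ 2 = (a n m / p m) * b m ^ 2 := by
      intro m
      rw [hgdef]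
      simp only
      rw [mul_pow, Real.sq_sqrt (hap0 n m)]
    have hfg : ∀ m, f m * g m = a n m * b m := by
      intro m
      have h1 : f m * Real.sqrt (a n m / p m) = a n m := by
        rw [hfdef]
        simp only
        rw [← Real.sqrt_mul (mul_nonneg (a_pos n m).le (p_pos m).le)]
        have : a n m * p m * (a n m / p m) = (a n m) ^ 2 := by
          field_simp [(p_pos m).ne']
        rw [this, Real.sqrt_sq (a_pos n m).le]
      calc f m * g m = (f m * Real.sqrt (a n m / p m)) * b m := by rw [hgdef]; ring
        _ = a n m * b m := by rw [h1]
    have hfsum : Summable (fun m => f m ^ 2) := ((row n).1).congr fun m => (hf2 m).symm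
    have hgsum : Summable (fun m => g m ^ 2) := by
      refine Summable.of_nonneg_of_le (fun m => sq_nonneg _) (fun m => ?_) hb2
      rw [hg2 m]
      calc (a n m / p m) * b m ^ 2 ≤ 1 * b m ^ 2 :=
            mul_le_mul_of_nonneg_right (hap1 n m) (sq_nonneg _)
        _ = b m ^ 2 := one_mul _
    obtain ⟨hsumfg, hcs⟩ := cs (fun m => Real.sqrt_nonneg _)
      (fun m => mul_nonneg (Real.sqrt_nonneg _) (hb0 m)) hfsum hgsum
    have hS1 : Summable (fun m => a n m * b m) := hsumfg.congr hfg
    have hS2 : Summable (fun m => (a n m / p m) * b m ^ 2) := hgsum.congr hg2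
    refine ⟨hS1, hS2, ?_⟩
    have e1 : ∑' m, a n m * b m = ∑' m, f m * g m := (tsum_congr hfg).symm
    have e2 : ∑' m, f m ^ 2 = ∑' m, a n m * p m := tsum_congr hf2
    have e3 : ∑' m, g m ^ 2 = ∑' m, (a n m / p m) * b m ^ 2 := tsum_congr hg2
    rw [e1]
    refine hcs.trans ?_
    rw [e2, e3]
    refine mul_le_mul_of_nonneg_right ((row n).2) ?_
    exact tsum_nonneg fun m => mul_nonneg (hap0 n m) (sq_nonneg _)
  -- the double array for the Schur/Fubini argument
  set q : ℕ → ℕ → ℝ := fun n m => p n * ((a n m / p m) * b m ^ 2) with hq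
  have hq0 : ∀ n m, 0 ≤ q n m := fun n m =>
    mul_nonneg (p_pos n).le (mul_nonneg (hap0 n m) (sq_nonneg _))
  have hq_eq : ∀ m n, q n m = (a m n * p n) * (b m ^ 2 / p m) := by
    intro m n
    rw [hq]
    simp only
    rw [a_symm n m]
    ring
  have hcol : ∀ m, Summable (fun n => q n m) ∧ ∑' n, q n m ≤ 4 * b m ^ 2 := by
    intro m
    obtain ⟨hrsum, hrle⟩ := row m
    constructor
    · exact (hrsum.mul_right (b m ^ 2 / p m)).congr fun n => (hq_eq m n).symm
    · rw [tsum_congr (hq_eq m), tsum_mul_right]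
      calc (∑' n, a m n * p n) * (b m ^ 2 / p m)
          ≤ (4 * p m) * (b m ^ 2 / p m) :=
            mul_le_mul_of_nonneg_right hrle (div_nonneg (sq_nonneg _) (p_pos m).le)
        _ = 4 * b m ^ 2 := by
            field_simp [(p_pos m).ne']
  have hF : Summable (fun mn : ℕ × ℕ => q mn.2 mn.1) := by
    refine (summable_prod_of_nonneg fun mn => hq0 _ _).2 ⟨fun m => (hcol m).1, ?_⟩
    refine Summable.of_nonneg_of_le (fun m => tsum_nonneg fun n => hq0 n m)
      (fun m => (hcol m).2) (hb2.mul_left 4)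
  have huq : Summable (Function.uncurry q) := by
    have := hF.prod_symm
    exact this.congr fun nm => rfl
  have hcomm : ∑' n, ∑' m, q n m = ∑' m, ∑' n, q n m := (Summable.tsum_comm huq).symm
  have hQrow : Summable (fun n => ∑' m, q n m) := huq.prod
  have hQcol : Summable (fun m => ∑' n, q n m) := hF.prod
  have h_pnU : ∀ n, ∑' m, q n m = p n * ∑' m, (a n m / p m) * b m ^ 2 := fun n =>
    tsum_mul_left
  -- per-row bound on ℓ² norms of the output
  have hxsum : ∀ n : ℕ, Summable (fun m => x m / ((n:ℂ) + (m:ℂ) + 1)) := by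
    intro n
    apply Summable.of_norm
    exact ((key n).1).congr fun m => (hnorm n m).symm
  have hLle : ∀ n : ℕ, ‖∑' m : ℕ, x m / ((n:ℂ) + (m:ℂ) + 1)‖ ^ 2 ≤ 4 * ∑' m, q n m := by
    intro n
    obtain ⟨hS1, hS2, hcs⟩ := key n
    have h1 : ‖∑' m : ℕ, x m / ((n:ℂ) + (m:ℂ) + 1)‖ ≤ ∑' m, a n m * b m := by
      calc ‖∑' m : ℕ, x m / ((n:ℂ) + (m:ℂ) + 1)‖
          ≤ ∑' m, ‖x m / ((n:ℂ) + (m:ℂ) + 1)‖ :=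
            norm_tsum_le_tsum_norm (hS1.congr fun m => (hnorm n m).symm)
        _ = ∑' m, a n m * b m := tsum_congr (hnorm n)
    have h2 : ‖∑' m : ℕ, x m / ((n:ℂ) + (m:ℂ) + 1)‖ ^ 2 ≤ (∑' m, a n m * b m) ^ 2 :=
      pow_le_pow_left₀ (norm_nonneg _) h1 2
    refine h2.trans (hcs.trans ?_)
    rw [h_pnU n]
    ring_nf
    exact le_refl _
  have hLsum : Summable (fun n : ℕ => ‖∑' m : ℕ, x m / ((n:ℂ) + (m:ℂ) + 1)‖ ^ 2) :=
    Summable.of_nonneg_of_le (fun n : ℕ => sq_nonneg _) hLle (hQrow.mul_left 4)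
  constructor
  · apply memℓp_gen
    have : ∀ n : ℕ, ‖∑' m : ℕ, x m / ((n:ℂ) + (m:ℂ) + 1)‖ ^ (2 : ℝ≥0∞).toReal
        = ‖∑' m : ℕ, x m / ((n:ℂ) + (m:ℂ) + 1)‖ ^ 2 := by
      intro n
      norm_num
    exact hLsum.congr fun n => (this n).symm
  · calc ∑' n : ℕ, ‖∑' m : ℕ, x m / ((n:ℂ) + (m:ℂ) + 1)‖ ^ 2
        ≤ ∑' n, 4 * ∑' m, q n m := Summable.tsum_le_tsum hLle hLsum (hQrow.mul_left 4)
      _ = 4 * ∑' n, ∑' m, q n m := tsum_mul_left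
      _ = 4 * ∑' m, ∑' n, q n m := by rw [hcomm]
      _ ≤ 4 * ∑' m, 4 * b m ^ 2 := by
          refine mul_le_mul_of_nonneg_left ?_ (by norm_num)
          exact Summable.tsum_le_tsum (fun m => (hcol m).2) hQcol (hb2.mul_left 4)
      _ = 16 * ∑' m, b m ^ 2 := by rw [tsum_mul_left]; ring
      _ = 16 * ∑' n : ℕ, ‖x n‖ ^ 2 := rfl
end

section
/- For every complex number M with Re M > 0, the equation M = π/sin(πμ) has exactly one solution μ with 0 < Re μ ≤ 1/2, except when M ∈ (0,π), in which case there are exactly two solutions, of the form μ = 1/2 ± it with t > 0. -/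
open Complex

private lemma sinReHelper (z : ℂ) : (Complex.sin z).re = Real.sin z.re * Real.cosh z.im := by
  rw [Complex.sin_eq]
  simp [Complex.sin_ofReal_re]

private lemma sinHalfStrip (s : ℝ) :
    Complex.sin ((Real.pi : ℂ) * (1 / 2 + (s : ℂ) * I)) = (Real.cosh (Real.pi * s) : ℂ) := by
  have h : (Real.pi : ℂ) * (1 / 2 + (s : ℂ) * I) =
      ((Real.pi / 2 : ℝ) : ℂ) + ((Real.pi * s : ℝ) : ℂ) * I := by push_cast; ring
  rw [h, Complex.sin_add_mul_I, ← Complex.ofReal_cosh, ← Complex.ofReal_sinh]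
  push_cast
  rw [Complex.sin_pi_div_two, Complex.cos_pi_div_two]
  ring

private lemma intEqZero {k : ℤ} (h1 : (-1 : ℝ) < k) (h2 : (k : ℝ) < 1) : k = 0 := by
  have a1 : (-1 : ℤ) < k := by exact_mod_cast h1
  have a2 : k < 1 := by exact_mod_cast h2
  omega

private lemma stripDichotomy {μ μ' : ℂ} (h1 : 0 < μ.re) (h2 : μ.re ≤ 1 / 2)
    (h1' : 0 < μ'.re) (h2' : μ'.re ≤ 1 / 2)
    (hs : Complex.sin ((Real.pi : ℂ) * μ) = Complex.sin ((Real.pi : ℂ) * μ')) :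
    μ' = μ ∨ (μ.re = 1 / 2 ∧ μ' = 1 - μ) := by
  have hπ : (Real.pi : ℂ) ≠ 0 := by exact_mod_cast Real.pi_ne_zero
  rw [Complex.sin_eq_sin_iff] at hs
  obtain ⟨k, hk | hk⟩ := hs
  · left
    have hμ : μ' = 2 * k + μ := by
      apply mul_left_cancel₀ hπ
      rw [hk]; ring
    have hre := congrArg Complex.re hμ
    simp at hre
    have hk0 : k = 0 := by
      apply intEqZero <;> nlinarith
    rw [hμ, hk0]; simp
  · right
    have hμ : μ' = (2 * k + 1) - μ := by
      apply mul_left_cancel₀ hπ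
      rw [hk]; ring
    have hre := congrArg Complex.re hμ
    simp at hre
    have hk0 : k = 0 := by
      apply intEqZero <;> nlinarith
    rw [hk0] at hμ hre
    push_cast at hμ hre
    constructor
    · linarith
    · rw [hμ]; ring

set_option maxHeartbeats 2000000 in
/-- For `Re M > 0`, the equation `M = π/sin(πμ)` has exactly one solution `μ` in the
strip `0 < Re μ ≤ 1/2`, except when `M` is real with `0 < M < π`, in which case there
are exactly two solutions, of the form `μ = 1/2 ± it` with `t > 0`. -/
theorem solutions_in_strip (M : ℂ) (hM : 0 < M.re) :
    (¬ (M.im = 0 ∧ M.re < Real.pi) →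
      ∃! μ : ℂ, (0 < μ.re ∧ μ.re ≤ 1 / 2) ∧
        M = (Real.pi : ℂ) / Complex.sin ((Real.pi : ℂ) * μ)) ∧
    ((M.im = 0 ∧ M.re < Real.pi) →
      ∃ t : ℝ, 0 < t ∧
        {μ : ℂ | (0 < μ.re ∧ μ.re ≤ 1 / 2) ∧
            M = (Real.pi : ℂ) / Complex.sin ((Real.pi : ℂ) * μ)} =
          {1 / 2 + Complex.I * t, 1 / 2 - Complex.I * t}) := by
  have hπR : (0:ℝ) < Real.pi := Real.pi_pos
  have hπ : (Real.pi : ℂ) ≠ 0 := by exact_mod_cast Real.pi_ne_zero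
  have hM0 : M ≠ 0 := fun h => by simp [h] at hM
  obtain ⟨w, hw⟩ : ∃ w : ℂ, w = (Real.pi : ℂ) / M := ⟨_, rfl⟩
  have hw0 : w ≠ 0 := hw ▸ div_ne_zero hπ hM0
  have hiff : ∀ μ : ℂ, (M = (Real.pi:ℂ) / Complex.sin ((Real.pi:ℂ)*μ)) ↔
      Complex.sin ((Real.pi:ℂ)*μ) = w := by
    intro μ
    constructor
    · intro h
      by_cases hz : Complex.sin ((Real.pi:ℂ)*μ) = 0
      · rw [hz, div_zero] at h
        exact (hM0 h).elim
      · rw [eq_div_iff hz] at h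
        rw [hw, eq_div_iff hM0, mul_comm]
        exact h
    · intro h
      rw [h, hw]
      field_simp
  have hwre : 0 < w.re := by
    have h1 : 0 < Complex.normSq M := Complex.normSq_pos.mpr hM0
    rw [hw, Complex.div_re]
    simp only [Complex.ofReal_re, Complex.ofReal_im, zero_mul, zero_div, add_zero]
    positivity
  -- half-line computation
  have hhalfcase : ∀ μ : ℂ, μ.re = 1/2 →
      Complex.sin ((Real.pi:ℂ)*μ) = (Real.cosh (Real.pi * μ.im) : ℂ) := by
    intro μ hre
    have hμ : μ = 1/2 + (μ.im:ℂ) * I := by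
      apply Complex.ext <;> simp [hre]
    conv_lhs => rw [hμ]
    exact sinHalfStrip μ.im
  -- existence of a solution in the strip
  obtain ⟨z₁, hz₁⟩ := Complex.sin_surjective w
  obtain ⟨k, hkdef⟩ : ∃ k : ℤ, k = ⌈z₁.re / (2*Real.pi) - 1/2⌉ := ⟨_, rfl⟩
  obtain ⟨z₂, hz₂def⟩ : ∃ z₂ : ℂ, z₂ = z₁ - k * (2*(Real.pi:ℂ)) := ⟨_, rfl⟩
  have hz₂ : Complex.sin z₂ = w := by
    rw [hz₂def]
    rw [Complex.sin_periodic.sub_int_mul_eq]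
    exact hz₁
  have hz₂re : z₂.re = z₁.re - k * (2*Real.pi) := by
    simp [hz₂def]
  have hb1 : z₁.re / (2*Real.pi) - 1/2 ≤ (k:ℝ) := by
    rw [hkdef]; exact_mod_cast Int.le_ceil _
  have hb2 : (k:ℝ) < z₁.re / (2*Real.pi) - 1/2 + 1 := by
    rw [hkdef]; exact_mod_cast Int.ceil_lt_add_one _
  have h2π : (0:ℝ) < 2*Real.pi := by linarith
  have hA : z₁.re ≤ ((k:ℝ) + 1/2) * (2*Real.pi) := by
    rw [← div_le_iff₀ h2π]; linarith
  have hB : ((k:ℝ) - 1/2) * (2*Real.pi) < z₁.re := by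
    rw [← lt_div_iff₀ h2π]; linarith
  have hrange1 : -Real.pi < z₂.re := by rw [hz₂re]; nlinarith
  have hrange2 : z₂.re ≤ Real.pi := by rw [hz₂re]; nlinarith
  have hre2 : (Complex.sin z₂).re = Real.sin z₂.re * Real.cosh z₂.im := sinReHelper z₂
  rw [hz₂] at hre2
  have hsinpos : 0 < Real.sin z₂.re := by
    nlinarith [Real.cosh_pos z₂.im, hwre]
  have hx1 : 0 < z₂.re := by
    by_contra h
    push_neg at h
    have := Real.sin_nonpos_of_nonpos_of_neg_pi_le h (le_of_lt hrange1)
    linarith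
  have hx2 : z₂.re < Real.pi := by
    by_contra h
    push_neg at h
    have he : z₂.re = Real.pi := le_antisymm hrange2 h
    rw [he, Real.sin_pi] at hsinpos
    exact lt_irrefl 0 hsinpos
  obtain ⟨z₀, hsin0, h0a, h0b⟩ : ∃ z₀ : ℂ, Complex.sin z₀ = w ∧ 0 < z₀.re ∧
      z₀.re ≤ Real.pi/2 := by
    rcases le_or_gt z₂.re (Real.pi/2) with h | h
    · exact ⟨z₂, hz₂, hx1, h⟩
    · refine ⟨(Real.pi:ℂ) - z₂, ?_, ?_, ?_⟩
      · rw [Complex.sin_pi_sub]; exact hz₂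
      · simp; linarith
      · simp; linarith
  obtain ⟨μ₀, hμ₀def⟩ : ∃ μ₀ : ℂ, μ₀ = z₀ / (Real.pi:ℂ) := ⟨_, rfl⟩
  have hμ₀mul : (Real.pi:ℂ) * μ₀ = z₀ := by
    rw [hμ₀def]; field_simp
  have hμ₀re : μ₀.re = z₀.re / Real.pi := by
    rw [hμ₀def, Complex.div_ofReal_re]
  have hμ₀strip : 0 < μ₀.re ∧ μ₀.re ≤ 1/2 := by
    rw [hμ₀re]
    constructor
    · positivity
    · rw [div_le_iff₀ hπR]; linarith
  have hs0 : Complex.sin ((Real.pi:ℂ) * μ₀) = w := by rw [hμ₀mul]; exact hsin0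
  have hμ₀sol : M = (Real.pi:ℂ) / Complex.sin ((Real.pi:ℂ) * μ₀) := (hiff μ₀).mpr hs0
  constructor
  · -- unique case
    intro hne
    refine ⟨μ₀, ⟨hμ₀strip, hμ₀sol⟩, ?_⟩
    rintro μ' ⟨⟨h1', h2'⟩, hsol'⟩
    have hs' : Complex.sin ((Real.pi:ℂ) * μ') = w := (hiff μ').mp hsol'
    rcases stripDichotomy hμ₀strip.1 hμ₀strip.2 h1' h2' (by rw [hs0, hs']) with h | ⟨hhalf0, heq⟩
    · exact h
    · have hcoshw : w = (Real.cosh (Real.pi * μ₀.im) : ℂ) := by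
        rw [← hs0, hhalfcase μ₀ hhalf0]
      have hMeq : M = ((Real.pi / Real.cosh (Real.pi * μ₀.im) : ℝ) : ℂ) := by
        have hMw : M = (Real.pi:ℂ) / w := by
          rw [hw]; field_simp
        rw [hMw, hcoshw, Complex.ofReal_div]
      have hMim : M.im = 0 := by rw [hMeq, Complex.ofReal_im]
      have hMre : M.re = Real.pi / Real.cosh (Real.pi*μ₀.im) := by rw [hMeq, Complex.ofReal_re]
      have hge : Real.pi ≤ M.re := by
        by_contra h
        push_neg at h
        exact hne ⟨hMim, h⟩
      have hchpos := Real.cosh_pos (Real.pi*μ₀.im)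
      have hcosh1 : Real.cosh (Real.pi*μ₀.im) ≤ 1 := by
        rw [hMre, le_div_iff₀ hchpos] at hge
        nlinarith
      have hc1 : Real.cosh (Real.pi*μ₀.im) = 1 :=
        le_antisymm hcosh1 (Real.one_le_cosh _)
      have hsinh : Real.sinh (Real.pi*μ₀.im) = 0 := by
        nlinarith [Real.cosh_sq' (Real.pi*μ₀.im)]
      have him0 : μ₀.im = 0 := by
        have h0 := Real.sinh_eq_zero.mp hsinh
        rcases mul_eq_zero.mp h0 with h | h
        · exact absurd h (ne_of_gt hπR)
        · exact h
      have hμ₀eq : μ₀ = 1/2 := by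
        apply Complex.ext <;> simp [hhalf0, him0]
      rw [heq, hμ₀eq]
      norm_num
  · -- two-solution case
    rintro ⟨hMim, hMlt⟩
    obtain ⟨a, hadef⟩ : ∃ a : ℝ, a = M.re := ⟨_, rfl⟩
    have hapos : 0 < a := hadef ▸ hM
    have halt : a < Real.pi := hadef ▸ hMlt
    have hMa : M = (a:ℂ) := by
      apply Complex.ext <;> simp [hMim, hadef]
    obtain ⟨c, hcdef⟩ : ∃ c : ℝ, c = Real.pi / a := ⟨_, rfl⟩
    have hc0 : 0 < c := hcdef ▸ div_pos hπR hapos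
    have hc1 : 1 < c := hcdef ▸ (one_lt_div hapos).mpr halt
    obtain ⟨t, htdef⟩ : ∃ t : ℝ, t = Real.arsinh (Real.sqrt (c^2 - 1)) / Real.pi := ⟨_, rfl⟩
    have hsqpos : 0 < Real.sqrt (c^2-1) := Real.sqrt_pos.mpr (by nlinarith)
    have ht : 0 < t := htdef ▸ div_pos (Real.arsinh_pos_iff.mpr hsqpos) hπR
    have htc : Real.cosh (Real.pi * t) = c := by
      have hmul : Real.pi * t = Real.arsinh (Real.sqrt (c^2 - 1)) := by
        rw [htdef]; field_simp
      rw [hmul, Real.cosh_arsinh, Real.sq_sqrt (by nlinarith : (0:ℝ) ≤ c^2-1)]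
      rw [show (1 + (c^2-1)) = c^2 by ring]
      exact Real.sqrt_sq (le_of_lt hc0)
    have hwc : w = (c:ℂ) := by
      rw [hw, hMa, hcdef, Complex.ofReal_div]
    have hπca : Real.pi / c = a := by
      rw [hcdef]
      field_simp
    refine ⟨t, ht, ?_⟩
    ext μ
    simp only [Set.mem_setOf_eq, Set.mem_insert_iff, Set.mem_singleton_iff]
    constructor
    · rintro ⟨⟨h1, h2⟩, hsol⟩
      have hs : Complex.sin ((Real.pi:ℂ) * μ) = w := (hiff μ).mp hsol
      obtain ⟨μp, hμpdef⟩ : ∃ μp : ℂ, μp = 1/2 + (t:ℂ) * I := ⟨_, rfl⟩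
      have hμpre : μp.re = 1/2 := by simp [hμpdef]
      have hμp1 : (0:ℝ) < μp.re := by rw [hμpre]; norm_num
      have hμp2 : μp.re ≤ 1/2 := by rw [hμpre]
      have hsp : Complex.sin ((Real.pi:ℂ) * μp) = w := by
        rw [hμpdef, sinHalfStrip t, htc, hwc]
      rcases stripDichotomy hμp1 hμp2 h1 h2 (by rw [hsp, hs]) with h | ⟨_, h⟩
      · left; rw [h, hμpdef]; ring
      · right; rw [h, hμpdef]; ring
    · intro h
      have key : ∀ s : ℝ, (1/2 + Complex.I * (s:ℂ)).re = 1/2 := by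
        intro s; simp
      have hsolkey : ∀ s : ℝ, Real.cosh (Real.pi * s) = c →
          M = (Real.pi:ℂ) / Complex.sin ((Real.pi:ℂ) * (1/2 + Complex.I * (s:ℂ))) := by
        intro s hcs
        have hcomm : (1/2 + Complex.I * (s:ℂ)) = 1/2 + (s:ℂ) * I := by ring
        rw [hcomm, sinHalfStrip s, hcs, ← Complex.ofReal_div, hπca, hMa]
      rcases h with h | h
      · subst h
        refine ⟨⟨?_, ?_⟩, hsolkey t htc⟩
        · rw [key t]; norm_num
        · rw [key t]
      · subst h
        have hneg : (1/2 - Complex.I * (t:ℂ)) = 1/2 + Complex.I * ((-t : ℝ):ℂ) := by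
          push_cast; ring
        rw [hneg]
        have hcn : Real.cosh (Real.pi * (-t)) = c := by
          rw [show Real.pi * (-t) = -(Real.pi * t) by ring, Real.cosh_neg, htc]
        refine ⟨⟨?_, ?_⟩, hsolkey (-t) hcn⟩
        · rw [key (-t)]; norm_num
        · rw [key (-t)]
end

section
/- For t > 0 real, the Taylor coefficients of f_{it+1/2}(z) = (1-z)^{it-1/2} ₂F₁(it+1/2, it+1/2; 1; z) are real. -/
open Complex

/-- The Gauss hypergeometric function `₂F₁(a,b;c;z)`, via the Euler integral. -/
noncomputable def hyp2F1 (a b c z : ℂ) : ℂ :=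
  (Complex.Gamma c / (Complex.Gamma b * Complex.Gamma (c - b))) *
    ∫ t in (0:ℝ)..1, (t : ℂ) ^ (b - 1) * ((1 : ℂ) - t) ^ (c - b - 1) * (1 - z * t) ^ (-a)

open Filter MeasureTheory Set
open scoped Nat Topology ENNReal NNReal

noncomputable def poch (s : ℂ) (n : ℕ) : ℂ := (ascPochhammer ℂ n).eval s

lemma poch_zero (s : ℂ) : poch s 0 = 1 := by simp [poch]

lemma poch_one (s : ℂ) : poch s 1 = s := by simp [poch]

lemma poch_succ (s : ℂ) (n : ℕ) : poch s (n + 1) = poch s n * (s + n) := by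
  simp [poch, ascPochhammer_succ_right, Polynomial.eval_mul]

lemma poch_ne_zero {s : ℂ} (hs : s.im ≠ 0) (n : ℕ) : poch s n ≠ 0 := by
  induction n with
  | zero => simp [poch_zero]
  | succ n ih =>
    rw [poch_succ]
    refine mul_ne_zero ih fun h => hs ?_
    have := congrArg Complex.im h
    simpa using this

lemma one_sub_mem_slitPlane {w : ℂ} (hw : ‖w‖ < 1) : (1 - w) ∈ Complex.slitPlane := by
  rw [Complex.mem_slitPlane_iff]
  left
  have h1 : |w.re| ≤ ‖w‖ := Complex.abs_re_le_norm w
  have := (abs_le.mp h1).2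
  simp only [Complex.sub_re, Complex.one_re]
  linarith

lemma iteratedDeriv_one_sub_cpow (s : ℂ) (n : ℕ) :
    ∀ w ∈ Metric.ball (0 : ℂ) 1,
      iteratedDeriv n (fun u : ℂ => (1 - u) ^ (-s)) w = poch s n * (1 - w) ^ (-s - n) := by
  induction n with
  | zero => intro w _; simp [poch_zero]
  | succ n ih =>
    intro w hw
    rw [iteratedDeriv_succ]
    have hball : Metric.ball (0 : ℂ) 1 ∈ nhds w := Metric.isOpen_ball.mem_nhds hw
    have hev : (fun u => iteratedDeriv n (fun v : ℂ => (1 - v) ^ (-s)) u)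
        =ᶠ[nhds w] fun u => poch s n * (1 - u) ^ (-s - n) := by
      filter_upwards [hball] with u hu using ih u hu
    rw [hev.deriv_eq]
    have hslit : (1 - w) ∈ Complex.slitPlane :=
      one_sub_mem_slitPlane (mem_ball_zero_iff.mp hw)
    have h1 : HasDerivAt (fun u : ℂ => 1 - u) (-1) w := by
      simpa using (hasDerivAt_id w).const_sub 1
    have hd : HasDerivAt (fun u : ℂ => (1 - u) ^ (-s - n))
        ((-s - n) * (1 - w) ^ (-s - n - 1) * (-1)) w := h1.cpow_const hslit
    rw [deriv_const_mul _ hd.differentiableAt, hd.deriv, poch_succ]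
    have hexp : -s - ((n : ℂ) + 1) = -s - n - 1 := by ring
    push_cast
    rw [hexp]
    ring

lemma hasSum_binomial (s : ℂ) {z : ℂ} (hz : ‖z‖ < 1) :
    HasSum (fun n : ℕ => poch s n / n ! * z ^ n) ((1 - z) ^ (-s)) := by
  have hdiff : DifferentiableOn ℂ (fun u : ℂ => (1 - u) ^ (-s)) (Metric.ball 0 1) := by
    intro w hw
    have hslit : (1 - w) ∈ Complex.slitPlane :=
      one_sub_mem_slitPlane (mem_ball_zero_iff.mp hw)
    have h1 : HasDerivAt (fun u : ℂ => 1 - u) (-1) w := by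
      simpa using (hasDerivAt_id w).const_sub 1
    exact (h1.cpow_const hslit).differentiableAt.differentiableWithinAt
  have H := Complex.hasSum_taylorSeries_on_ball hdiff (mem_ball_zero_iff.mpr hz)
  have hfun : (fun n : ℕ => poch s n / n ! * z ^ n)
      = fun n : ℕ => (n ! : ℂ)⁻¹ • (z - 0) ^ n •
          iteratedDeriv n (fun u : ℂ => (1 - u) ^ (-s)) 0 := by
    funext n
    rw [iteratedDeriv_one_sub_cpow s n 0 (by simp)]
    simp only [smul_eq_mul, sub_zero, Complex.one_cpow]
    ring
  rw [hfun]
  exact H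

lemma tendsto_ratio (w : ℂ) :
    Tendsto (fun n : ℕ => ‖(w + n) / ((n : ℂ) + 1)‖) atTop (𝓝 1) := by
  have h0 : Tendsto (fun n : ℕ => (((n : ℂ)) + 1)⁻¹) atTop (𝓝 0) := by
    have hr : Tendsto (fun n : ℕ => (1 : ℝ) / (n + 1)) atTop (𝓝 0) :=
      tendsto_one_div_add_atTop_nhds_zero_nat
    have := (Complex.continuous_ofReal.tendsto 0).comp hr
    simpa [Function.comp_def, one_div] using this
  have h1 : Tendsto (fun n : ℕ => (w + n) / ((n : ℂ) + 1)) atTop (𝓝 1) := by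
    have : Tendsto (fun n : ℕ => (w - 1) * ((n : ℂ) + 1)⁻¹ + 1) atTop (𝓝 ((w - 1) * 0 + 1)) :=
      ((tendsto_const_nhds.mul h0).add tendsto_const_nhds)
    simp only [mul_zero, zero_add] at this
    refine this.congr fun n => ?_
    have hn : ((n : ℂ) + 1) ≠ 0 := by
      intro h; exact n.succ_ne_zero (by exact_mod_cast h)
    field_simp
    ring
  simpa using h1.norm

lemma summable_poch (s : ℂ) (hs : s.im ≠ 0) {z : ℂ} (hz : ‖z‖ < 1) :
    Summable fun n : ℕ => ‖poch s n / n ! * z ^ n‖ := by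
  rcases eq_or_ne z 0 with rfl | hz0
  · apply summable_of_ne_finset_zero (s := {0})
    intro n hn
    have : n ≠ 0 := by simpa using hn
    simp [zero_pow this]
  · have hne : ∀ n : ℕ, poch s n / n ! * z ^ n ≠ 0 := fun n =>
      mul_ne_zero (div_ne_zero (poch_ne_zero hs n) (by exact_mod_cast Nat.factorial_ne_zero n))
        (pow_ne_zero n hz0)
    apply summable_of_ratio_test_tendsto_lt_one hz
    · exact Filter.Eventually.of_forall fun n => by
        simpa [Real.norm_eq_abs, abs_eq_zero] using norm_ne_zero_iff.mpr (hne n)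
    · have key : ∀ n : ℕ, poch s (n + 1) / (n + 1)! * z ^ (n + 1)
          = (poch s n / n ! * z ^ n) * ((s + n) / ((n : ℂ) + 1) * z) := by
        intro n
        rw [poch_succ, Nat.factorial_succ]
        have hn : ((n : ℂ) + 1) ≠ 0 := by
          intro h; exact n.succ_ne_zero (by exact_mod_cast h)
        have hf : ((n ! : ℂ)) ≠ 0 := by exact_mod_cast Nat.factorial_ne_zero n
        push_cast
        field_simp
        ring
      have := (tendsto_ratio s).mul_const ‖z‖
      rw [one_mul] at this
      refine Tendsto.congr (fun n => ?_) this
      rw [Real.norm_eq_abs, Real.norm_eq_abs, abs_norm, abs_norm, key n, norm_mul,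
        mul_div_cancel_left₀ _ (norm_ne_zero_iff.mpr (hne n)), norm_mul]

lemma summable_poch_sq (s : ℂ) (hs : s.im ≠ 0) {z : ℂ} (hz : ‖z‖ < 1) :
    Summable fun n : ℕ => ‖(poch s n / n !) ^ 2 * z ^ n‖ := by
  rcases eq_or_ne z 0 with rfl | hz0
  · apply summable_of_ne_finset_zero (s := {0})
    intro n hn
    have : n ≠ 0 := by simpa using hn
    simp [zero_pow this]
  · have hne : ∀ n : ℕ, (poch s n / n !) ^ 2 * z ^ n ≠ 0 := fun n =>
      mul_ne_zero (pow_ne_zero 2 (div_ne_zero (poch_ne_zero hs n)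
        (by exact_mod_cast Nat.factorial_ne_zero n))) (pow_ne_zero n hz0)
    apply summable_of_ratio_test_tendsto_lt_one hz
    · exact Filter.Eventually.of_forall fun n => by
        simpa [Real.norm_eq_abs, abs_eq_zero] using norm_ne_zero_iff.mpr (hne n)
    · have key : ∀ n : ℕ, (poch s (n + 1) / (n + 1)!) ^ 2 * z ^ (n + 1)
          = ((poch s n / n !) ^ 2 * z ^ n) * (((s + n) / ((n : ℂ) + 1)) ^ 2 * z) := by
        intro n
        rw [poch_succ, Nat.factorial_succ]
        have hn : ((n : ℂ) + 1) ≠ 0 := by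
          intro h; exact n.succ_ne_zero (by exact_mod_cast h)
        have hf : ((n ! : ℂ)) ≠ 0 := by exact_mod_cast Nat.factorial_ne_zero n
        push_cast
        field_simp
        ring
      have h2 : Tendsto (fun n : ℕ => ‖(s + n) / ((n : ℂ) + 1)‖ ^ 2 * ‖z‖) atTop
          (𝓝 (1 ^ 2 * ‖z‖)) :=
        (((tendsto_ratio s).pow 2).mul_const ‖z‖)
      rw [one_pow, one_mul] at h2
      refine Tendsto.congr (fun n => ?_) h2
      rw [Real.norm_eq_abs, Real.norm_eq_abs, abs_norm, abs_norm, key n, norm_mul,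
        mul_div_cancel_left₀ _ (norm_ne_zero_iff.mpr (hne n)), norm_mul, norm_pow]

noncomputable def pp (a : ℂ) (n : ℕ) : ℂ := poch (1 - a) n / n !
noncomputable def qq (a : ℂ) (n : ℕ) : ℂ := (poch a n / n !) ^ 2
noncomputable def cc (a : ℂ) (n : ℕ) : ℂ := ∑ k ∈ Finset.range (n + 1), pp a (n - k) * qq a k

lemma natc_succ_ne (n : ℕ) : ((n : ℂ) + 1) ≠ 0 := by
  intro h; exact n.succ_ne_zero (by exact_mod_cast h)

lemma pp_zero (a : ℂ) : pp a 0 = 1 := by simp [pp, poch_zero]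
lemma qq_zero (a : ℂ) : qq a 0 = 1 := by simp [qq, poch_zero]
lemma pp_one (a : ℂ) : pp a 1 = 1 - a := by simp [pp, poch_one]
lemma qq_one (a : ℂ) : qq a 1 = a ^ 2 := by simp [qq, poch_one]

lemma pp_succ (a : ℂ) (n : ℕ) : pp a (n + 1) = pp a n * ((1 - a + n) / ((n : ℂ) + 1)) := by
  rw [pp, pp, poch_succ, Nat.factorial_succ]
  push_cast
  rw [div_mul_div_comm, mul_comm ((n ! : ℂ)) ((n : ℂ) + 1)]

lemma qq_succ (a : ℂ) (n : ℕ) : qq a (n + 1) = qq a n * ((a + n) / ((n : ℂ) + 1)) ^ 2 := by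
  rw [qq, qq, poch_succ, Nat.factorial_succ]
  push_cast
  rw [← mul_pow]
  congr 1
  rw [div_mul_div_comm, mul_comm ((n ! : ℂ)) ((n : ℂ) + 1)]

lemma sub_nat_ne_zero {a : ℂ} (ha : a.im ≠ 0) (x : ℝ) : ((x : ℂ) - a) ≠ 0 := by
  intro h
  have := congrArg Complex.im h
  simp only [Complex.sub_im, Complex.ofReal_im, Complex.zero_im] at this
  exact ha (by linarith)

set_option maxHeartbeats 1600000 in
lemma key (a : ℂ) (n k : ℕ) (hk : k ≤ n) :
    ((n : ℂ) + 2) ^ 2 * pp a (n + 2 - k) * qq a k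
      - (2 * ((n : ℂ) + 1) ^ 2 + 2 * ((n : ℂ) + 1) + 1 - a * (1 - a)) * pp a (n + 1 - k) * qq a k
      + ((n : ℂ) + 1) ^ 2 * pp a (n - k) * qq a k
    = a * ((k + 1 : ℕ) : ℂ) ^ 2 * pp a (n + 1 - (k + 1)) * qq a (k + 1) / ((n + 2 - (k + 1) : ℕ) : ℂ)
      - a * (k : ℂ) ^ 2 * pp a (n + 1 - k) * qq a k / ((n + 2 - k : ℕ) : ℂ) := by
  obtain ⟨j, rfl⟩ := Nat.exists_eq_add_of_le hk
  have e1 : k + j + 2 - k = j + 2 := by omega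
  have e2 : k + j + 1 - k = j + 1 := by omega
  have e3 : k + j - k = j := by omega
  have e4 : k + j + 1 - (k + 1) = j := by omega
  have e5 : k + j + 2 - (k + 1) = j + 1 := by omega
  rw [e1, e2, e3, e4, e5]
  have h2 : pp a (j + 2) = pp a (j + 1) * ((1 - a + ((j : ℂ) + 1)) / (((j : ℂ) + 1) + 1)) := by
    exact_mod_cast pp_succ a (j + 1)
  rw [h2, pp_succ a j, qq_succ a k]
  have hj1 : ((j : ℂ) + 1) ≠ 0 := natc_succ_ne j
  have hj2 : ((j : ℂ) + 1 + 1) ≠ 0 := by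
    intro h; exact (j + 1).succ_ne_zero (by exact_mod_cast h)
  have hk1 : ((k : ℂ) + 1) ≠ 0 := natc_succ_ne k
  have hj2' : ((j : ℂ) + 2) ≠ 0 := by
    intro h; exact (j + 1).succ_ne_zero (by exact_mod_cast h)
  push_cast
  rw [div_sub_div _ _ hj1 hj2', eq_div_iff (mul_ne_zero hj1 hj2')]
  field_simp
  ring

set_option maxHeartbeats 1600000 in
lemma cc_rec (a : ℂ) (ha : a.im ≠ 0) (n : ℕ) :
    ((n : ℂ) + 2) ^ 2 * cc a (n + 2)
      = (2 * ((n : ℂ) + 1) ^ 2 + 2 * ((n : ℂ) + 1) + 1 - a * (1 - a)) * cc a (n + 1)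
        - ((n : ℂ) + 1) ^ 2 * cc a n := by
  set B : ℂ := 2 * ((n : ℂ) + 1) ^ 2 + 2 * ((n : ℂ) + 1) + 1 - a * (1 - a) with hB
  set D : ℕ → ℂ := fun k =>
    a * (k : ℂ) ^ 2 * pp a (n + 1 - k) * qq a k / ((n + 2 - k : ℕ) : ℂ) with hD
  have htel : ∑ k ∈ Finset.range (n + 1),
      (((n : ℂ) + 2) ^ 2 * pp a (n + 2 - k) * qq a k - B * pp a (n + 1 - k) * qq a k
        + ((n : ℂ) + 1) ^ 2 * pp a (n - k) * qq a k)
      = D (n + 1) - D 0 := by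
    rw [← Finset.sum_range_sub (f := D)]
    refine Finset.sum_congr rfl fun k hk => ?_
    have hk' : k ≤ n := Nat.lt_succ_iff.mp (Finset.mem_range.mp hk)
    simp only [hD, hB]
    have := key a n k hk'
    push_cast at this ⊢
    convert this using 3
  have hD0 : D 0 = 0 := by simp [hD]
  have hDn' : D (n + 1) = a * ((n : ℂ) + 1) ^ 2 * qq a (n + 1) := by
    have e : n + 1 - (n + 1) = 0 := by omega
    have e2 : n + 2 - (n + 1) = 1 := by omega
    rw [hD]
    simp only [e, e2, pp_zero, Nat.cast_one, div_one]
    push_cast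
    ring
  -- expand cc's
  have hc2 : cc a (n + 2) = (∑ k ∈ Finset.range (n + 1), pp a (n + 2 - k) * qq a k)
      + pp a 1 * qq a (n + 1) + pp a 0 * qq a (n + 2) := by
    rw [cc, Finset.sum_range_succ, Finset.sum_range_succ]
    have e1 : n + 2 - (n + 1) = 1 := by omega
    have e2 : n + 2 - (n + 2) = 0 := by omega
    rw [e1, e2]
  have hc1 : cc a (n + 1) = (∑ k ∈ Finset.range (n + 1), pp a (n + 1 - k) * qq a k)
      + pp a 0 * qq a (n + 1) := by
    rw [cc, Finset.sum_range_succ]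
    have e1 : n + 1 - (n + 1) = 0 := by omega
    rw [e1]
  have hc0 : cc a n = ∑ k ∈ Finset.range (n + 1), pp a (n - k) * qq a k := rfl
  have split : ∀ (A Bf C : ℕ → ℂ), ∑ k ∈ Finset.range (n + 1), (A k - Bf k + C k)
      = (∑ k ∈ Finset.range (n + 1), A k) - (∑ k ∈ Finset.range (n + 1), Bf k)
        + (∑ k ∈ Finset.range (n + 1), C k) := by
    intro A Bf C
    rw [Finset.sum_add_distrib, Finset.sum_sub_distrib]
  have pull : ∀ (b : ℂ) (g : ℕ → ℕ), ∑ k ∈ Finset.range (n + 1), b * pp a (g k) * qq a k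
      = b * ∑ k ∈ Finset.range (n + 1), pp a (g k) * qq a k := by
    intro b g
    rw [Finset.mul_sum]
    exact Finset.sum_congr rfl fun k _ => by ring
  rw [split, pull _ (fun k => n + 2 - k), pull _ (fun k => n + 1 - k),
    pull _ (fun k => n - k)] at htel
  have hbound : ((n : ℂ) + 2) ^ 2 * (pp a 1 * qq a (n + 1) + pp a 0 * qq a (n + 2))
      - B * (pp a 0 * qq a (n + 1)) + D (n + 1) = 0 := by
    rw [hDn', pp_one, pp_zero, qq_succ a (n + 1), hB]
    have hn2 : ((n : ℂ) + 1 + 1) ≠ 0 := by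
      intro h; exact (n + 1).succ_ne_zero (by exact_mod_cast h)
    push_cast
    field_simp
    ring
  linear_combination ((n : ℂ) + 2) ^ 2 * hc2 - B * hc1 + ((n : ℂ) + 1) ^ 2 * hc0 + htel
    + hbound - hD0

noncomputable def rseq (lam : ℝ) : ℕ → ℝ
  | 0 => 1
  | 1 => 1 - lam
  | (n + 2) => ((2 * ((n : ℝ) + 1) ^ 2 + 2 * ((n : ℝ) + 1) + 1 - lam) * rseq lam (n + 1)
      - ((n : ℝ) + 1) ^ 2 * rseq lam n) / ((n : ℝ) + 2) ^ 2

lemma cc_eq_rseq (a : ℂ) (ha : a.im ≠ 0) (lam : ℝ) (hlam : a * (1 - a) = (lam : ℂ)) (n : ℕ) :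
    cc a n = ((rseq lam n : ℝ) : ℂ) := by
  have key2 : ∀ m, cc a m = ((rseq lam m : ℝ) : ℂ) ∧ cc a (m + 1) = ((rseq lam (m + 1) : ℝ) : ℂ) := by
    intro m
    induction m with
    | zero =>
      constructor
      · simp [cc, pp_zero, qq_zero, rseq]
      · have h1 : cc a 1 = pp a 1 * qq a 0 + pp a 0 * qq a 1 := by
          simp [cc, Finset.sum_range_succ]
        rw [h1, pp_zero, qq_zero, pp_one, qq_one]
        show (1 - a) * 1 + 1 * a ^ 2 = ((1 - lam : ℝ) : ℂ)
        push_cast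
        linear_combination -hlam
    | succ m ih =>
      refine ⟨ih.2, ?_⟩
      have hrec := cc_rec a ha m
      rw [ih.1, ih.2, hlam] at hrec
      have h2 : ((m : ℂ) + 2) ^ 2 ≠ 0 := by
        apply pow_ne_zero
        intro h; exact (m + 1).succ_ne_zero (by exact_mod_cast h)
      have : cc a (m + 2) = ((2 * ((m : ℂ) + 1) ^ 2 + 2 * ((m : ℂ) + 1) + 1 - (lam : ℂ))
          * ((rseq lam (m + 1) : ℝ) : ℂ) - ((m : ℂ) + 1) ^ 2 * ((rseq lam m : ℝ) : ℂ))
          / ((m : ℂ) + 2) ^ 2 := by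
        rw [eq_div_iff h2]
        linear_combination hrec
      rw [this]
      show _ = ((rseq lam (m + 1 + 1) : ℝ) : ℂ)
      rw [show m + 1 + 1 = m + 2 from rfl, rseq]
      push_cast
      ring
  exact (key2 n).1

lemma add_nat_ne_zero {a : ℂ} (ha : a.im ≠ 0) (n : ℕ) : a + (n : ℂ) ≠ 0 := by
  intro h
  have := congrArg Complex.im h
  simp only [Complex.add_im, Complex.natCast_im, Complex.zero_im, add_zero] at this
  exact ha this

lemma Gamma_poch {a : ℂ} (ha : a.im ≠ 0) (n : ℕ) :
    Complex.Gamma (a + n) = poch a n * Complex.Gamma a := by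
  induction n with
  | zero => simp [poch]
  | succ n ih =>
    have h : a + ((n : ℂ) + 1) = (a + n) + 1 := by ring
    push_cast
    rw [h, Complex.Gamma_add_one _ (add_nat_ne_zero ha n), ih, poch_succ]
    ring

lemma hyp_expand {a : ℂ} (hre : a.re = 1 / 2) (him : a.im ≠ 0) {z : ℂ} (hz : ‖z‖ < 1) :
    hyp2F1 a a 1 z = ∑' k : ℕ, (poch a k / k !) ^ 2 * z ^ k := by
  have hre1a : (1 - a).re = 1 / 2 := by
    simp only [Complex.sub_re, Complex.one_re, hre]
    norm_num
  have hGa : Complex.Gamma a ≠ 0 :=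
    Complex.Gamma_ne_zero_of_re_pos (by rw [hre]; norm_num)
  have hG1a : Complex.Gamma (1 - a) ≠ 0 :=
    Complex.Gamma_ne_zero_of_re_pos (by rw [hre1a]; norm_num)
  -- the summand functions
  set F : ℕ → ℝ → ℂ := fun k x =>
    poch a k / k ! * z ^ k * ((x : ℂ) ^ (a - 1 + k) * ((1 : ℂ) - x) ^ (-a)) with hF
  -- dominating function
  set g : ℝ → ℂ := fun x => (x : ℂ) ^ (a - 1) * ((1 : ℂ) - x) ^ (-a) with hg
  -- pointwise expansion of the integrand on Ioo
  have hpt : ∀ x ∈ Ioo (0 : ℝ) 1,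
      (x : ℂ) ^ (a - 1) * ((1 : ℂ) - x) ^ (1 - a - 1) * (1 - z * x) ^ (-a)
        = ∑' k : ℕ, F k x := by
    intro x hx
    have hx0 : (0 : ℝ) < x := hx.1
    have hzx : ‖z * (x : ℂ)‖ < 1 := by
      rw [norm_mul, Complex.norm_real]
      have hxa : ‖(x : ℝ)‖ = x := abs_of_pos hx0
      rw [hxa]
      calc ‖z‖ * x ≤ ‖z‖ * 1 := by
            exact mul_le_mul_of_nonneg_left hx.2.le (norm_nonneg z)
        _ = ‖z‖ := mul_one _
        _ < 1 := hz
    have hbin := (hasSum_binomial a hzx).mul_left ((x : ℂ) ^ (a - 1) * ((1 : ℂ) - x) ^ (-a))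
    have h1a : (1 : ℂ) - a - 1 = -a := by ring
    rw [h1a]
    have hx0c : (x : ℂ) ≠ 0 := by
      exact_mod_cast ne_of_gt hx0
    rw [show (x : ℂ) ^ (a - 1) * ((1 : ℂ) - ↑x) ^ (-a) * (1 - z * ↑x) ^ (-a)
        = (x : ℂ) ^ (a - 1) * ((1 : ℂ) - ↑x) ^ (-a) * ((1 : ℂ) - z * ↑x) ^ (-a) from by norm_num]
    rw [← hbin.tsum_eq]
    refine tsum_congr fun k => ?_
    rw [hF]
    simp only
    rw [Complex.cpow_add _ _ hx0c, Complex.cpow_natCast, mul_pow]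
    ring
  -- continuity / measurability of each term
  have hmeas : ∀ k : ℕ, AEStronglyMeasurable (F k) (volume.restrict (Ioo (0:ℝ) 1)) := by
    intro k
    apply ContinuousOn.aestronglyMeasurable _ measurableSet_Ioo
    intro x hx
    apply ContinuousAt.continuousWithinAt
    apply ContinuousAt.mul continuousAt_const
    apply ContinuousAt.mul
    · exact Complex.continuousAt_ofReal_cpow_const x _ (Or.inr (ne_of_gt hx.1))
    · have h1x : ContinuousAt (fun x : ℝ => ((1 - x : ℝ) : ℂ) ^ (-a)) x := by
        have := Complex.continuousAt_ofReal_cpow_const (1 - x) (-a)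
          (Or.inr (ne_of_gt (show (0:ℝ) < 1 - x by linarith [hx.2])))
        exact this.comp (continuousAt_const.sub continuousAt_id)
      refine ContinuousAt.congr h1x ?_
      filter_upwards with y
      push_cast
      ring_nf
  -- norm bound
  have hnorm_g : ∀ x ∈ Ioo (0:ℝ) 1, ‖g x‖ = x ^ (-(1:ℝ)/2) * (1 - x) ^ (-(1:ℝ)/2) := by
    intro x hx
    rw [hg]
    simp only [norm_mul]
    rw [Complex.norm_cpow_eq_rpow_re_of_pos hx.1]
    have h1x : ((1 : ℂ) - x) = ((1 - x : ℝ) : ℂ) := by push_cast; ring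
    rw [h1x, Complex.norm_cpow_eq_rpow_re_of_pos (by linarith [hx.2])]
    congr 2
    · simp [Complex.sub_re, hre]; norm_num
    · simp [Complex.neg_re, hre]; norm_num
  have hbound : ∀ k : ℕ, ∀ x ∈ Ioo (0:ℝ) 1,
      ‖F k x‖ ≤ ‖poch a k / k ! * z ^ k‖ * ‖g x‖ := by
    intro k x hx
    have hky : ‖(x : ℂ) ^ (a - 1 + k)‖ ≤ ‖(x : ℂ) ^ (a - 1)‖ := by
      rw [Complex.norm_cpow_eq_rpow_re_of_pos hx.1, Complex.norm_cpow_eq_rpow_re_of_pos hx.1]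
      apply Real.rpow_le_rpow_of_exponent_ge hx.1 hx.2.le
      simp only [Complex.add_re, Complex.sub_re, Complex.one_re, Complex.natCast_re]
      linarith [Nat.cast_nonneg (α := ℝ) k]
    have h1 : ‖F k x‖ = ‖poch a k / k ! * z ^ k‖ * (‖(x : ℂ) ^ (a - 1 + k)‖ * ‖((1:ℂ) - x) ^ (-a)‖) := by
      rw [hF]; simp only [norm_mul]
    have h2 : ‖g x‖ = ‖(x : ℂ) ^ (a - 1)‖ * ‖((1:ℂ) - x) ^ (-a)‖ := by
      rw [hg]; simp only [norm_mul]
    rw [h1, h2]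
    refine mul_le_mul_of_nonneg_left ?_ (norm_nonneg _)
    exact mul_le_mul_of_nonneg_right hky (norm_nonneg _)
  -- integrability of the dominating function
  have hgInt : IntegrableOn g (Ioo (0:ℝ) 1) := by
    have hbc := Complex.betaIntegral_convergent (u := a) (v := 1 - a)
      (by rw [hre]; norm_num) (by rw [hre1a]; norm_num)
    rw [intervalIntegrable_iff_integrableOn_Ioo_of_le zero_le_one] at hbc
    have hgeq : g = fun x : ℝ => (x : ℂ) ^ (a - 1) * ((1 : ℂ) - x) ^ (1 - a - 1) := by
      funext x
      rw [hg, show (1 : ℂ) - a - 1 = -a by ring]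
    rw [hgeq]
    exact hbc
  have hK : (∫⁻ x in Ioo (0:ℝ) 1, (‖g x‖₊ : ℝ≥0∞)) < ⊤ := hgInt.2
  -- lintegral bounds
  have hlint : ∀ k : ℕ, (∫⁻ x in Ioo (0:ℝ) 1, (‖F k x‖₊ : ℝ≥0∞))
      ≤ (‖poch a k / k ! * z ^ k‖₊ : ℝ≥0∞) * ∫⁻ x in Ioo (0:ℝ) 1, (‖g x‖₊ : ℝ≥0∞) := by
    intro k
    rw [← MeasureTheory.lintegral_const_mul' _ _ ENNReal.coe_ne_top]
    apply MeasureTheory.lintegral_mono_ae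
    rw [MeasureTheory.ae_restrict_iff' measurableSet_Ioo]
    filter_upwards with x hx
    have h := hbound k x hx
    rw [← ENNReal.coe_mul, ENNReal.coe_le_coe]
    rw [← NNReal.coe_le_coe]
    push_cast
    exact h
  have hsumnn : Summable fun k : ℕ => ‖poch a k / k ! * z ^ k‖₊ := by
    rw [← NNReal.summable_coe]
    exact (summable_poch a him hz).congr fun k => (coe_nnnorm _).symm
  have hswap_cond : (∑' k : ℕ, ∫⁻ x in Ioo (0:ℝ) 1, (‖F k x‖₊ : ℝ≥0∞)) ≠ ⊤ := by
    apply ne_top_of_le_ne_top _ (ENNReal.tsum_le_tsum hlint)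
    rw [ENNReal.tsum_mul_right]
    exact ENNReal.mul_ne_top (ENNReal.tsum_coe_ne_top_iff_summable.2 hsumnn) hK.ne
  have hswap : (∫ x in Ioo (0:ℝ) 1, ∑' k : ℕ, F k x) = ∑' k : ℕ, ∫ x in Ioo (0:ℝ) 1, F k x :=
    MeasureTheory.integral_tsum hmeas hswap_cond
  -- value of each integral
  have hkf : ∀ k : ℕ, (k ! : ℂ) ≠ 0 := fun k => by exact_mod_cast Nat.factorial_ne_zero k
  have hval : ∀ k : ℕ, (∫ x in Ioo (0:ℝ) 1, F k x)
      = poch a k / k ! * z ^ k * (poch a k * Complex.Gamma a * Complex.Gamma (1 - a) / k !) := by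
    intro k
    rw [hF]
    simp only
    rw [MeasureTheory.integral_const_mul]
    congr 1
    have hbeta : (∫ x in Ioo (0:ℝ) 1, ((x : ℂ) ^ (a - 1 + k) * ((1 : ℂ) - x) ^ (-a)))
        = Complex.betaIntegral (a + k) (1 - a) := by
      rw [← MeasureTheory.integral_Ioc_eq_integral_Ioo,
        ← intervalIntegral.integral_of_le zero_le_one, Complex.betaIntegral]
      simp only [show a + (k : ℂ) - 1 = a - 1 + k by ring, show (1 : ℂ) - a - 1 = -a by ring]
    rw [hbeta]
    have h1 := Complex.Gamma_mul_Gamma_eq_betaIntegral (s := a + k) (t := 1 - a)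
      (by simp only [Complex.add_re, Complex.natCast_re, hre]; positivity)
      (by rw [hre1a]; norm_num)
    rw [show a + (k : ℂ) + (1 - a) = (k : ℂ) + 1 by ring] at h1
    have hGk : Complex.Gamma ((k : ℂ) + 1) = (k ! : ℂ) := by
      exact_mod_cast Complex.Gamma_nat_eq_factorial k
    rw [Gamma_poch him k, hGk] at h1
    rw [eq_div_iff (hkf k)]
    linear_combination -h1
  -- assembly
  rw [hyp2F1, Complex.Gamma_one,
    intervalIntegral.integral_of_le zero_le_one, MeasureTheory.integral_Ioc_eq_integral_Ioo,
    MeasureTheory.setIntegral_congr_fun measurableSet_Ioo hpt, hswap, tsum_congr hval,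
    ← tsum_mul_left]
  refine tsum_congr fun k => ?_
  have hG : Complex.Gamma a * Complex.Gamma (1 - a) ≠ 0 := mul_ne_zero hGa hG1a
  rw [one_div_mul_eq_div, div_eq_iff hG]
  field_simp

/-- For real `t > 0`, the Taylor coefficients at `0` of
`f_{it+1/2}(z) = (1-z)^(it-1/2) ₂F₁(it+1/2, it+1/2; 1; z)` are real. -/
theorem eigenfunction_real_coefficients (t : ℝ) (ht : 0 < t) :
    ∃ a : ℕ → ℝ, ∀ z : ℂ, ‖z‖ < 1 →
      (1 - z) ^ (Complex.I * t - 1 / 2) *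
          hyp2F1 (Complex.I * t + 1 / 2) (Complex.I * t + 1 / 2) 1 z =
        ∑' n : ℕ, (a n : ℂ) * z ^ n := by
  set a : ℂ := Complex.I * t + 1 / 2 with ha
  have hre : a.re = 1 / 2 := by
    simp [ha, Complex.add_re, Complex.mul_re]
  have him : a.im = t := by
    simp [ha, Complex.add_im, Complex.mul_im]
  have him' : a.im ≠ 0 := by rw [him]; exact ne_of_gt ht
  have him1a : (1 - a).im ≠ 0 := by
    simp only [Complex.sub_im, Complex.one_im, him, zero_sub]
    exact neg_ne_zero.mpr (ne_of_gt ht)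
  set lam : ℝ := 1 / 4 + t ^ 2 with hlamdef
  have hlam : a * (1 - a) = ((lam : ℝ) : ℂ) := by
    rw [ha, hlamdef]
    push_cast
    linear_combination (-(t:ℂ)^2) * Complex.I_sq
  refine ⟨rseq lam, fun z hz => ?_⟩
  have hexp : Complex.I * t - 1 / 2 = -(1 - a) := by rw [ha]; ring
  rw [hexp, hyp_expand hre him' hz, ← (hasSum_binomial (1 - a) hz).tsum_eq]
  rw [tsum_mul_tsum_eq_tsum_sum_antidiagonal_of_summable_norm
    (summable_poch (1 - a) him1a hz) (summable_poch_sq a him' hz)]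
  refine tsum_congr fun n => ?_
  rw [Finset.Nat.sum_antidiagonal_eq_sum_range_succ_mk]
  have hstep : ∀ k ∈ Finset.range (n + 1),
      poch (1 - a) k / k ! * z ^ k * ((poch a (n - k) / (n - k)!) ^ 2 * z ^ (n - k))
        = (pp a k * qq a (n - k)) * z ^ n := by
    intro k hk
    have hk' : k ≤ n := Nat.lt_succ_iff.mp (Finset.mem_range.mp hk)
    have hzp : z ^ k * z ^ (n - k) = z ^ n := by
      rw [← pow_add]
      congr 1
      omega
    rw [pp, qq]
    rw [← hzp]
    ring
  rw [Finset.sum_congr rfl hstep, ← Finset.sum_mul]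
  have hccn : ∑ k ∈ Finset.range (n + 1), pp a k * qq a (n - k) = cc a n := by
    rw [cc, ← Finset.sum_range_reflect]
    refine Finset.sum_congr rfl fun k hk => ?_
    have hk' : k ≤ n := Nat.lt_succ_iff.mp (Finset.mem_range.mp hk)
    have e1 : n + 1 - 1 - k = n - k := by omega
    have e2 : n - (n - k) = k := by omega
    rw [e1, e2]
  rw [hccn, cc_eq_rseq a him' lam hlam]
end
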